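/- If G is a b-monotone finite simple graph with b(G) ≤ p, then G contains no induced subgraph isomorphic to R_{p+1}. -/

import Mathlib

open SimpleGraph

/-- The degree of a vertex `v` in a simple graph `G`. -/
noncomputable def vdeg {V : Type*} (G : SimpleGraph V) (v : V) : ℕ :=
  Nat.card {w // G.Adj v w}

/-- A Grundy coloring of `G` with `k` colors: a proper coloring whose `k` color classes are
all nonempty (surjectivity) and such that every vertex of a class has a neighbor in every
smaller-indexed class. -/
def IsGrundyColoring {V : Type*} (G : SimpleGraph V) {k : ℕ} (C : V → Fin k) : Prop :=
  (∀ v w, G.Adj v w → C v ≠ C w) ∧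
  Function.Surjective C ∧
  (∀ v : V, ∀ i : Fin k, i < C v → ∃ w, G.Adj v w ∧ C w = i)

/-- The Grundy number of `G`: the largest `k` admitting a Grundy coloring with `k` colors. -/
noncomputable def grundyNum {V : Type*} (G : SimpleGraph V) : ℕ :=
  sSup {k | ∃ C : V → Fin k, IsGrundyColoring G C}

/-- A b-coloring of `G` with `k` colors: a proper coloring such that every color class
contains a vertex having a neighbor in each of the other classes (hence all classes are
nonempty). -/
def IsBColoring {V : Type*} (G : SimpleGraph V) {k : ℕ} (C : V → Fin k) : Prop :=
  (∀ v w, G.Adj v w → C v ≠ C w) ∧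
  (∀ i : Fin k, ∃ v, C v = i ∧ ∀ j : Fin k, j ≠ i → ∃ w, G.Adj v w ∧ C w = j)

/-- The b-chromatic number of `G`: the largest `k` admitting a b-coloring with `k` colors. -/
noncomputable def bChrom {V : Type*} (G : SimpleGraph V) : ℕ :=
  sSup {k | ∃ C : V → Fin k, IsBColoring G C}

/-- The tree `R_k` of radius two: a root (`none`), its `k - 1` children
(`some (Sum.inl i)`), and `k - 2` leaves attached to each child
(`some (Sum.inr (i, j))` is a leaf attached to child `i`). -/
def Rtree (k : ℕ) : SimpleGraph (Option (Fin (k - 1) ⊕ Fin (k - 1) × Fin (k - 2))) :=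
  SimpleGraph.fromRel (fun a b =>
    match a, b with
    | none, some (Sum.inl _) => True
    | some (Sum.inl i), some (Sum.inr (i', _)) => i = i'
    | _, _ => False)

lemma IsBColoring.comp_iso {V W : Type*} {G : SimpleGraph V} {H : SimpleGraph W} {k : ℕ}
    {C : V → Fin k} (hC : IsBColoring G C) (φ : G ≃g H) : IsBColoring H (C ∘ φ.symm) := by
  refine ⟨fun v w hvw => hC.1 _ _ (φ.symm.map_adj_iff.mpr hvw), fun i => ?_⟩
  obtain ⟨v, hv, hdom⟩ := hC.2 i
  refine ⟨φ v, by simpa using hv, fun j hj => ?_⟩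
  obtain ⟨w, hvw, hw⟩ := hdom j hj
  exact ⟨φ w, φ.map_adj_iff.mpr hvw, by simpa using hw⟩

lemma le_bChrom_of_isBColoring {V : Type*} [Finite V] {G : SimpleGraph V} {k : ℕ}
    {C : V → Fin k} (hC : IsBColoring G C) : k ≤ bChrom G := by
  refine le_csSup ⟨Nat.card V, ?_⟩ ⟨C, hC⟩
  rintro m ⟨D, hD⟩
  choose rep hrep using hD.2
  have hinj : Function.Injective rep := fun i j hij => by
    rw [← (hrep i).1, ← (hrep j).1, hij]
  simpa using Nat.card_le_card_of_injective rep hinj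

/-- The root gets color `0`, child `i` gets color `i + 1`, and the `p - 1` leaves below child `i`
get, in order, the remaining colors `1, …, i, i + 2, …, p`. -/
def rtreeColoring (p : ℕ) :
    Option (Fin (p + 1 - 1) ⊕ Fin (p + 1 - 1) × Fin (p + 1 - 2)) → Fin (p + 1)
  | none => 0
  | some (Sum.inl i) => ⟨i + 1, by omega⟩
  | some (Sum.inr (i, j)) => if j.val < i.val then ⟨j + 1, by omega⟩ else ⟨j + 2, by omega⟩

section RtreeColoring

variable {p : ℕ}

lemma rtree_adj_root_child (i : Fin (p + 1 - 1)) :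
    (Rtree (p + 1)).Adj none (some (Sum.inl i)) := by
  simp [Rtree]

lemma rtree_adj_child_leaf (i : Fin (p + 1 - 1)) (j : Fin (p + 1 - 2)) :
    (Rtree (p + 1)).Adj (some (Sum.inl i)) (some (Sum.inr (i, j))) := by
  simp [Rtree]

lemma rtreeColoring_adj_ne {v w : Option (Fin (p + 1 - 1) ⊕ Fin (p + 1 - 1) × Fin (p + 1 - 2))}
    (hvw : (Rtree (p + 1)).Adj v w) : rtreeColoring p v ≠ rtreeColoring p w := by
  rcases v with _ | i | ⟨i, a⟩ <;> rcases w with _ | j | ⟨j, b⟩ <;> simp [Rtree] at hvw <;>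
    (try subst hvw) <;>
    simp only [rtreeColoring, ne_eq, Fin.ext_iff, Fin.val_zero, apply_ite Fin.val] <;>
    (try split_ifs) <;> omega

lemma rtreeColoring_root_dominating (j : Fin (p + 1)) (hj : j ≠ 0) :
    ∃ w, (Rtree (p + 1)).Adj none w ∧ rtreeColoring p w = j := by
  have hj0 : j.val ≠ 0 := Fin.val_ne_zero_iff.mpr hj
  refine ⟨some (Sum.inl ⟨j.val - 1, by omega⟩), rtree_adj_root_child _, ?_⟩
  ext; simp only [rtreeColoring]; omega

lemma rtreeColoring_child_dominating (i : Fin (p + 1 - 1)) (j : Fin (p + 1))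
    (hj : j ≠ rtreeColoring p (some (Sum.inl i))) :
    ∃ w, (Rtree (p + 1)).Adj (some (Sum.inl i)) w ∧ rtreeColoring p w = j := by
  have hji : j.val ≠ i.val + 1 := by simpa [rtreeColoring, Fin.ext_iff] using hj
  rcases Nat.eq_zero_or_pos j.val with hj0 | hjpos
  · exact ⟨none, (rtree_adj_root_child i).symm, Fin.ext (by simp [rtreeColoring, hj0])⟩
  · have hleaf : j.val - (if j.val ≤ i.val then 1 else 2) < p + 1 - 2 := by split <;> omega
    refine ⟨_, rtree_adj_child_leaf i ⟨_, hleaf⟩, ?_⟩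
    ext; simp only [rtreeColoring, apply_ite Fin.val]; split_ifs <;> omega

lemma isBColoring_rtreeColoring (p : ℕ) : IsBColoring (Rtree (p + 1)) (rtreeColoring p) := by
  refine ⟨fun v w => rtreeColoring_adj_ne, fun i => ?_⟩
  by_cases hi : i = 0
  · exact ⟨none, hi.symm, fun j hj => rtreeColoring_root_dominating j (hi ▸ hj)⟩
  · have hi0 : i.val ≠ 0 := Fin.val_ne_zero_iff.mpr hi
    have hcol : rtreeColoring p (some (Sum.inl ⟨i.val - 1, by omega⟩)) = i := by
      ext; simp only [rtreeColoring]; omega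
    exact ⟨_, hcol, fun j hj => rtreeColoring_child_dominating _ j (by rwa [hcol])⟩

end RtreeColoring

/-- If `G` is a b-monotone finite simple graph with `b(G) ≤ p`, then `G` contains no
induced subgraph isomorphic to `R_{p+1}`. -/
theorem stmt13 {V : Type*} [Fintype V] (G : SimpleGraph V) (p : ℕ)
    (hmono : ∀ s : Set V, bChrom (G.induce s) ≤ bChrom G)
    (hb : bChrom G ≤ p) :
    IsEmpty (Rtree (p + 1) ↪g G) := by
  refine ⟨fun e => ?_⟩
  have hcopy : p + 1 ≤ bChrom (G.induce (Set.range e)) :=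
    le_bChrom_of_isBColoring ((isBColoring_rtreeColoring p).comp_iso e.isoInduceRange)
  have := (hcopy.trans (hmono _)).trans hb
  omega
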